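/- Let m ∈ ℝ, σ > 0, s > 0, t > 0 and x > y be real numbers. Then ∫_y^∞ f̂(x,y,z̃,t)·(1 − π(s, z̃ − y)) dz̃ = 1 − π(t+s, x − y); that is, the killed transition density f̂ and the survival function 1 − π satisfy the Chapman–Kolmogorov relation used in the proof of the lemma on the joint probability γ. -/

import Mathlib

open MeasureTheory Real Set

/-- The standard normal density. -/
noncomputable def phi (x : ℝ) : ℝ := (Real.sqrt (2 * Real.pi))⁻¹ * Real.exp (-x ^ 2 / 2)

/-- The standard normal cumulative distribution function. -/
noncomputable def Phi (x : ℝ) : ℝ := ∫ u in Set.Iio x, phi u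

/-- The first-passage probability `π(t,x)`. -/
noncomputable def piF (m σ t x : ℝ) : ℝ :=
  1 - Phi ((x + m * t) / (σ * Real.sqrt t)) +
    Real.exp (-2 * m * x / σ ^ 2) * Phi ((-x + m * t) / (σ * Real.sqrt t))

/-- The killed transition density `f̂(x,y,z̃,t)`. -/
noncomputable def fhat (m σ x y z t : ℝ) : ℝ :=
  (1 / (σ * Real.sqrt t)) * Real.exp (-m * (x - z) / σ ^ 2 - m ^ 2 * t / (2 * σ ^ 2)) *
    (phi ((x - z) / (σ * Real.sqrt t)) - phi ((-x - z + 2 * y) / (σ * Real.sqrt t)))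

/-!
The drift factors out of the killed density with barrier `0`,
`f̂(p, 0, w, u) = exp (m (w - p) / σ² - m² u / (2σ²)) · (k_u(w - p) - k_u(w + p))`
with `k_u` the `N(0, σ² u)` density, and these exponential factors multiply along a path
`p → w → v`. So the Chapman–Kolmogorov identity for `f̂` reduces to the driftless one for the
method-of-images kernel. Its integrand is even in `w`, so the half-line integral is half the
full-line one, which follows from the convolution identity `k_t * k_s = k_{t+s}`. Writing
`1 - π(s, w) = ∫_0^∞ f̂(w, 0, v, s) dv` and exchanging the order of integration gives the theorem.
-/

lemma setIntegral_Ioi_comp_sub (f : ℝ → ℝ) (a c : ℝ) :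
    ∫ x in Ioi a, f (x - c) = ∫ x in Ioi (a - c), f x := by
  have h := (measurableEmbedding_subRight c).setIntegral_map (μ := volume) f (Ioi (a - c))
  rw [map_sub_right_eq_self volume c, preimage_sub_const_Ioi, sub_add_cancel] at h
  exact h.symm

lemma phi_nonneg (x : ℝ) : 0 ≤ phi x := by
  unfold phi; positivity

lemma phi_neg (x : ℝ) : phi (-x) = phi x := by
  simp [phi]

lemma phi_le_phi_of_sq_le {q r : ℝ} (h : q ^ 2 ≤ r ^ 2) : phi r ≤ phi q := by
  unfold phi
  gcongr

lemma phi_mul_phi_of_sq_add_sq_eq {q₁ q₂ r₁ r₂ : ℝ}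
    (h : q₁ ^ 2 + q₂ ^ 2 = r₁ ^ 2 + r₂ ^ 2) :
    phi q₁ * phi q₂ = phi r₁ * phi r₂ := by
  simp only [phi]
  rw [mul_mul_mul_comm, ← Real.exp_add, mul_mul_mul_comm, ← Real.exp_add]
  congr 2
  linarith

lemma phi_eq_gaussianPDFReal : phi = ProbabilityTheory.gaussianPDFReal 0 1 := by
  ext x
  simp [phi, ProbabilityTheory.gaussianPDFReal]

lemma integrable_phi : Integrable phi :=
  phi_eq_gaussianPDFReal ▸ ProbabilityTheory.integrable_gaussianPDFReal 0 1

lemma integral_phi : ∫ x, phi x = 1 :=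
  phi_eq_gaussianPDFReal ▸ ProbabilityTheory.integral_gaussianPDFReal_eq_one 0 one_ne_zero

lemma setIntegral_Ioi_phi (b : ℝ) : ∫ x in Ioi b, phi x = Phi (-b) := by
  rw [Phi, ← integral_Iic_eq_integral_Iio, ← integral_comp_neg_Ioi]
  simp only [phi_neg]

lemma Phi_nonneg (x : ℝ) : 0 ≤ Phi x :=
  setIntegral_nonneg measurableSet_Iio fun u _ => phi_nonneg u

lemma Phi_le_one (x : ℝ) : Phi x ≤ 1 :=
  integral_phi ▸ setIntegral_le_integral integrable_phi (.of_forall phi_nonneg)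

/-- The `N(0, c²)` density. -/
noncomputable def gaussKernel (c z : ℝ) : ℝ := c⁻¹ * phi (z / c)

lemma gaussKernel_neg (c z : ℝ) : gaussKernel c (-z) = gaussKernel c z := by
  rw [gaussKernel, neg_div, phi_neg, gaussKernel]

lemma gaussKernel_nonneg {c : ℝ} (hc : 0 ≤ c) (z : ℝ) : 0 ≤ gaussKernel c z :=
  mul_nonneg (inv_nonneg.2 hc) (phi_nonneg _)

lemma gaussKernel_le_of_sq_le {c q r : ℝ} (hc : 0 ≤ c) (h : q ^ 2 ≤ r ^ 2) :
    gaussKernel c r ≤ gaussKernel c q := by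
  refine mul_le_mul_of_nonneg_left (phi_le_phi_of_sq_le ?_) (inv_nonneg.2 hc)
  rw [div_pow, div_pow]
  gcongr

lemma integrable_gaussKernel {c : ℝ} (hc : c ≠ 0) : Integrable (gaussKernel c) :=
  (integrable_phi.comp_div hc).const_mul _

lemma integral_gaussKernel {c : ℝ} (hc : 0 < c) : ∫ z, gaussKernel c z = 1 := by
  simp only [gaussKernel]
  rw [integral_const_mul, Measure.integral_comp_div phi c, integral_phi, smul_eq_mul, mul_one,
    abs_of_pos hc, inv_mul_cancel₀ hc.ne']

lemma setIntegral_Ioi_gaussKernel_sub {c : ℝ} (hc : 0 < c) (μ : ℝ) :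
    ∫ w in Ioi 0, gaussKernel c (w - μ) = Phi (μ / c) := by
  rw [setIntegral_Ioi_comp_sub (gaussKernel c), zero_sub]
  simp only [gaussKernel, div_eq_inv_mul _ c]
  rw [integral_const_mul, integral_comp_mul_left_Ioi phi _ (inv_pos.2 hc), setIntegral_Ioi_phi,
    smul_eq_mul, inv_inv, inv_mul_cancel_left₀ hc.ne']
  ring_nf

lemma gaussKernel_mul_gaussKernel {a c : ℝ} (ha : 0 < a) (hc : 0 < c) (A B w : ℝ) :
    gaussKernel a (w - A) * gaussKernel c (B - w) =
      gaussKernel (√(a ^ 2 + c ^ 2)) (B - A) *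
        gaussKernel (a * c / √(a ^ 2 + c ^ 2))
          (w - (A * c ^ 2 + B * a ^ 2) / (a ^ 2 + c ^ 2)) := by
  have hd : 0 < √(a ^ 2 + c ^ 2) := Real.sqrt_pos.2 (by positivity)
  have hd2 : √(a ^ 2 + c ^ 2) ^ 2 = a ^ 2 + c ^ 2 := Real.sq_sqrt (by positivity)
  simp only [gaussKernel]
  rw [mul_mul_mul_comm, mul_mul_mul_comm _ (phi _)]
  congr 1
  · field_simp
  · apply phi_mul_phi_of_sq_add_sq_eq
    simp only [div_pow, mul_pow, hd2]
    field_simp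
    ring

lemma integrable_gaussKernel_mul_gaussKernel {a c : ℝ} (ha : 0 < a) (hc : 0 < c) (A B : ℝ) :
    Integrable fun w => gaussKernel a (w - A) * gaussKernel c (B - w) := by
  have he : a * c / √(a ^ 2 + c ^ 2) ≠ 0 := by positivity
  simp only [gaussKernel_mul_gaussKernel ha hc]
  exact ((integrable_gaussKernel he).comp_sub_right _).const_mul _

lemma integral_gaussKernel_mul_gaussKernel {a c : ℝ} (ha : 0 < a) (hc : 0 < c) (A B : ℝ) :
    ∫ w, gaussKernel a (w - A) * gaussKernel c (B - w) =
      gaussKernel (√(a ^ 2 + c ^ 2)) (B - A) := by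
  have he : 0 < a * c / √(a ^ 2 + c ^ 2) := by positivity
  simp only [gaussKernel_mul_gaussKernel ha hc]
  rw [integral_const_mul, integral_sub_right_eq_self (gaussKernel _), integral_gaussKernel he,
    mul_one]

/-- Method of images: the transition density from `p` to `w` of a driftless Brownian motion
killed at `0`, with `c` the standard deviation of its increment. -/
noncomputable def killedGaussKernel (c p w : ℝ) : ℝ :=
  gaussKernel c (w - p) - gaussKernel c (w + p)

lemma killedGaussKernel_comm (c p w : ℝ) :
    killedGaussKernel c p w = killedGaussKernel c w p := by
  rw [killedGaussKernel, killedGaussKernel, ← gaussKernel_neg c (w - p), neg_sub, add_comm]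

lemma killedGaussKernel_neg (c p w : ℝ) :
    killedGaussKernel c p (-w) = -killedGaussKernel c p w := by
  rw [killedGaussKernel, killedGaussKernel, show -w - p = -(w + p) by ring,
    show -w + p = -(w - p) by ring, gaussKernel_neg, gaussKernel_neg, neg_sub]

lemma killedGaussKernel_nonneg {c p w : ℝ} (hc : 0 ≤ c) (hp : 0 ≤ p) (hw : 0 ≤ w) :
    0 ≤ killedGaussKernel c p w :=
  sub_nonneg.2 (gaussKernel_le_of_sq_le hc (by nlinarith))

lemma integral_killedGaussKernel_mul_killedGaussKernel {a c : ℝ} (ha : 0 < a) (hc : 0 < c)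
    (p v : ℝ) :
    ∫ w, killedGaussKernel a p w * killedGaussKernel c w v =
      2 * killedGaussKernel (√(a ^ 2 + c ^ 2)) p v := by
  set T := fun A B w => gaussKernel a (w - A) * gaussKernel c (B - w) with hT
  have hint : ∀ A B, Integrable (T A B) := integrable_gaussKernel_mul_gaussKernel ha hc
  have hexpand : (fun w => killedGaussKernel a p w * killedGaussKernel c w v) =
      T p v - T p (-v) - T (-p) v + T (-p) (-v) := by
    ext w
    simp only [hT, Pi.add_apply, Pi.sub_apply, killedGaussKernel, sub_neg_eq_add,
      show -v - w = -(v + w) by ring, gaussKernel_neg]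
    ring
  rw [hexpand, integral_add' (((hint _ _).sub (hint _ _)).sub (hint _ _)) (hint _ _),
    integral_sub' ((hint _ _).sub (hint _ _)) (hint _ _), integral_sub' (hint _ _) (hint _ _)]
  simp only [hT, integral_gaussKernel_mul_gaussKernel ha hc]
  rw [killedGaussKernel, show -v - p = -(v + p) by ring, show -v - -p = -(v - p) by ring,
    sub_neg_eq_add, gaussKernel_neg, gaussKernel_neg]
  ring

lemma setIntegral_Ioi_killedGaussKernel_mul_killedGaussKernel {a c : ℝ} (ha : 0 < a)
    (hc : 0 < c) (p v : ℝ) :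
    ∫ w in Ioi 0, killedGaussKernel a p w * killedGaussKernel c w v =
      killedGaussKernel (√(a ^ 2 + c ^ 2)) p v := by
  have heven : ∀ w, killedGaussKernel a p |w| * killedGaussKernel c |w| v =
      killedGaussKernel a p w * killedGaussKernel c w v := by
    intro w
    rcases abs_choice w with h | h
    · rw [h]
    · rw [h, killedGaussKernel_neg, killedGaussKernel_comm c, killedGaussKernel_neg,
        killedGaussKernel_comm c, neg_mul_neg]
  have h := integral_comp_abs (f := fun w => killedGaussKernel a p w * killedGaussKernel c w v)
  simp only [heven, integral_killedGaussKernel_mul_killedGaussKernel ha hc] at h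
  linarith

lemma fhat_eq_fhat_zero (m σ x y z t : ℝ) :
    fhat m σ x y z t = fhat m σ (x - y) 0 (z - y) t := by
  rw [fhat, fhat, sub_sub_sub_cancel_right,
    show -x - z + 2 * y = -(x - y) - (z - y) + 2 * 0 by ring]

lemma fhat_zero_eq (m σ p w u : ℝ) :
    fhat m σ p 0 w u = Real.exp (m * (w - p) / σ ^ 2 - m ^ 2 * u / (2 * σ ^ 2)) *
      killedGaussKernel (σ * √u) p w := by
  rw [fhat, killedGaussKernel, gaussKernel, gaussKernel, show -m * (p - w) = m * (w - p) by ring,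
    show (p - w) / (σ * √u) = -((w - p) / (σ * √u)) by ring,
    show (-p - w + 2 * 0) / (σ * √u) = -((w + p) / (σ * √u)) by ring, phi_neg, phi_neg]
  ring

lemma exp_mul_gaussKernel {σ u : ℝ} (hσ : 0 < σ) (hu : 0 < u) (m z : ℝ) :
    Real.exp (m * z / σ ^ 2 - m ^ 2 * u / (2 * σ ^ 2)) * gaussKernel (σ * √u) z =
      gaussKernel (σ * √u) (z - m * u) := by
  have hc2 : (σ * √u) ^ 2 = σ ^ 2 * u := by rw [mul_pow, sq_sqrt hu.le]
  simp only [gaussKernel, phi]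
  rw [mul_left_comm, mul_left_comm (Real.exp _), ← Real.exp_add]
  congr 3
  rw [div_pow, div_pow, hc2]
  field_simp
  ring

lemma fhat_zero_eq_sub {σ u : ℝ} (hσ : 0 < σ) (hu : 0 < u) (m p w : ℝ) :
    fhat m σ p 0 w u = gaussKernel (σ * √u) (w - (p + m * u)) -
      Real.exp (-2 * m * p / σ ^ 2) * gaussKernel (σ * √u) (w - (m * u - p)) := by
  have hreflect : Real.exp (m * (w - p) / σ ^ 2 - m ^ 2 * u / (2 * σ ^ 2)) =
      Real.exp (-2 * m * p / σ ^ 2) *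
        Real.exp (m * (w + p) / σ ^ 2 - m ^ 2 * u / (2 * σ ^ 2)) := by
    rw [← Real.exp_add]
    ring_nf
  rw [fhat_zero_eq, killedGaussKernel, mul_sub, exp_mul_gaussKernel hσ hu, hreflect, mul_assoc,
    exp_mul_gaussKernel hσ hu, show w - p - m * u = w - (p + m * u) by ring,
    show w + p - m * u = w - (m * u - p) by ring]

lemma integrable_fhat {σ u : ℝ} (hσ : 0 < σ) (hu : 0 < u) (m p : ℝ) :
    Integrable fun w => fhat m σ p 0 w u := by
  have hc : σ * √u ≠ 0 := by positivity
  simp only [fhat_zero_eq_sub hσ hu]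
  exact ((integrable_gaussKernel hc).comp_sub_right _).sub
    (((integrable_gaussKernel hc).comp_sub_right _).const_mul _)

lemma fhat_nonneg {σ p w : ℝ} (hσ : 0 ≤ σ) (hp : 0 ≤ p) (hw : 0 ≤ w) (m u : ℝ) :
    0 ≤ fhat m σ p 0 w u := by
  rw [fhat_zero_eq]
  exact mul_nonneg (Real.exp_pos _).le (killedGaussKernel_nonneg (by positivity) hp hw)

lemma piF_nonneg (m σ s p : ℝ) : 0 ≤ piF m σ s p := by
  have := Phi_le_one ((p + m * s) / (σ * √s))
  have := mul_nonneg (Real.exp_pos (-2 * m * p / σ ^ 2)).le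
    (Phi_nonneg ((-p + m * s) / (σ * √s)))
  rw [piF]
  linarith

lemma setIntegral_Ioi_fhat {σ s : ℝ} (hσ : 0 < σ) (hs : 0 < s) (m p : ℝ) :
    ∫ v in Ioi 0, fhat m σ p 0 v s = 1 - piF m σ s p := by
  have hc : 0 < σ * √s := by positivity
  simp only [fhat_zero_eq_sub hσ hs]
  rw [integral_sub ((integrable_gaussKernel hc.ne').comp_sub_right _).integrableOn
      (((integrable_gaussKernel hc.ne').comp_sub_right _).const_mul _).integrableOn,
    integral_const_mul, setIntegral_Ioi_gaussKernel_sub hc, setIntegral_Ioi_gaussKernel_sub hc,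
    piF, show m * s - p = -p + m * s by ring]
  ring

lemma setIntegral_Ioi_fhat_mul_fhat {σ s t : ℝ} (hσ : 0 < σ) (ht : 0 < t) (hs : 0 < s)
    (m p v : ℝ) :
    ∫ w in Ioi 0, fhat m σ p 0 w t * fhat m σ w 0 v s = fhat m σ p 0 v (t + s) := by
  have hvar : √((σ * √t) ^ 2 + (σ * √s) ^ 2) = σ * √(t + s) := by
    rw [mul_pow, mul_pow, sq_sqrt ht.le, sq_sqrt hs.le, ← mul_add,
      sqrt_mul' _ (by positivity), sqrt_sq hσ.le]
  have hdrift : ∀ w, fhat m σ p 0 w t * fhat m σ w 0 v s =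
      Real.exp (m * (v - p) / σ ^ 2 - m ^ 2 * (t + s) / (2 * σ ^ 2)) *
        (killedGaussKernel (σ * √t) p w * killedGaussKernel (σ * √s) w v) := by
    intro w
    rw [fhat_zero_eq, fhat_zero_eq, mul_mul_mul_comm, ← Real.exp_add]
    ring_nf
  simp only [hdrift]
  rw [integral_const_mul, setIntegral_Ioi_killedGaussKernel_mul_killedGaussKernel
    (by positivity) (by positivity), hvar, fhat_zero_eq]

lemma integrable_fhat_mul_fhat {σ s t : ℝ} (hσ : 0 < σ) (ht : 0 < t) (hs : 0 < s) (m p : ℝ) :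
    Integrable (Function.uncurry fun w v => fhat m σ p 0 w t * fhat m σ w 0 v s)
      ((volume.restrict (Ioi 0)).prod (volume.restrict (Ioi 0))) := by
  have hmeas : AEStronglyMeasurable
      (Function.uncurry fun w v => fhat m σ p 0 w t * fhat m σ w 0 v s)
      ((volume.restrict (Ioi 0)).prod (volume.restrict (Ioi 0))) := by
    refine Continuous.aestronglyMeasurable ?_
    simp only [fhat, phi]
    fun_prop
  refine (integrable_prod_iff hmeas).2 ⟨.of_forall fun w => ?_, ?_⟩
  · exact (integrable_fhat hσ hs m w).restrict.const_mul (fhat m σ p 0 w t)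
  refine (integrable_fhat hσ ht m p).norm.restrict.mono' hmeas.norm.integral_prod_right' ?_
  filter_upwards [ae_restrict_mem measurableSet_Ioi] with w hw
  have hsurvival : ∫ v in Ioi 0, ‖fhat m σ p 0 w t * fhat m σ w 0 v s‖ =
      ‖fhat m σ p 0 w t‖ * (1 - piF m σ s w) := by
    rw [← setIntegral_Ioi_fhat hσ hs, ← integral_const_mul]
    refine setIntegral_congr_fun measurableSet_Ioi fun v hv => ?_
    rw [norm_mul, norm_of_nonneg (fhat_nonneg hσ.le (le_of_lt hw) (le_of_lt hv) m s)]
  change ‖∫ v in Ioi 0, ‖fhat m σ p 0 w t * fhat m σ w 0 v s‖‖ ≤ ‖fhat m σ p 0 w t‖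
  rw [hsurvival, norm_of_nonneg (mul_nonneg (norm_nonneg _) ?_)]
  · exact mul_le_of_le_one_right (norm_nonneg _) (sub_le_self _ (piF_nonneg m σ s w))
  · rw [← setIntegral_Ioi_fhat hσ hs]
    exact setIntegral_nonneg measurableSet_Ioi fun v hv =>
      fhat_nonneg hσ.le (le_of_lt hw) (le_of_lt hv) m s

theorem stmt_9_general (m σ s t x y : ℝ) (hσ : 0 < σ) (hs : 0 < s) (ht : 0 < t) :
    (∫ z in Set.Ioi y, fhat m σ x y z t * (1 - piF m σ s (z - y)))
      = 1 - piF m σ (t + s) (x - y) := by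
  calc (∫ z in Ioi y, fhat m σ x y z t * (1 - piF m σ s (z - y)))
      = ∫ w in Ioi 0, fhat m σ (x - y) 0 w t * (1 - piF m σ s w) := by
        simp only [fhat_eq_fhat_zero m σ x y _ t]
        rw [setIntegral_Ioi_comp_sub (fun w => fhat m σ (x - y) 0 w t * (1 - piF m σ s w)),
          sub_self]
    _ = ∫ w in Ioi 0, ∫ v in Ioi 0, fhat m σ (x - y) 0 w t * fhat m σ w 0 v s := by
        simp only [integral_const_mul, setIntegral_Ioi_fhat hσ hs]
    _ = ∫ v in Ioi 0, ∫ w in Ioi 0, fhat m σ (x - y) 0 w t * fhat m σ w 0 v s :=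
        integral_integral_swap (integrable_fhat_mul_fhat hσ ht hs m (x - y))
    _ = ∫ v in Ioi 0, fhat m σ (x - y) 0 v (t + s) := by
        simp only [setIntegral_Ioi_fhat_mul_fhat hσ ht hs]
    _ = 1 - piF m σ (t + s) (x - y) := setIntegral_Ioi_fhat hσ (add_pos ht hs) m (x - y)

/-- Let `m ∈ ℝ`, `σ > 0`, `s > 0`, `t > 0` and `x > y`. Then
`∫_y^∞ f̂(x,y,z̃,t)·(1 − π(s, z̃ − y)) dz̃ = 1 − π(t+s, x − y)` : the killed transition
density `f̂` and the survival function `1 − π` satisfy the Chapman–Kolmogorov relation. -/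
theorem stmt_9 (m σ s t x y : ℝ) (hσ : 0 < σ) (hs : 0 < s) (ht : 0 < t) (hxy : y < x) :
    (∫ z in Set.Ioi y, fhat m σ x y z t * (1 - piF m σ s (z - y)))
      = 1 - piF m σ (t + s) (x - y) :=
  stmt_9_general m σ s t x y hσ hs ht
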